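/- Let (H,G) be a Standard Basis for a fractional ideal I of O. Then the set v(H) = {v(h) : h ∈ H} generates v(I) as a semimodule over the semiring (Γ, inf, +): for every nonzero f ∈ I there exist s ≥ 1, γ_1,…,γ_s ∈ Γ and h_1,…,h_s ∈ H such that v(f) = inf{γ_1 + v(h_1), …, γ_s + v(h_s)}. In particular, v(I) is a finitely generated Γ-semimodule. -/

import Mathlib

noncomputable section
open PowerSeries

/-- Coefficient-wise definition of the continuous substitution homomorphism
`X_j ↦ x j` from multivariate power series to power series (each `x j` having
zero constant coefficient). -/
def psiFun {K : Type*} [CommRing K] {n : ℕ} (x : Fin n → PowerSeries K)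
    (F : MvPowerSeries (Fin n) K) : PowerSeries K :=
  PowerSeries.mk fun m =>
    PowerSeries.coeff (R := K) m (∑ e : Fin n → Fin (m + 1),
      MvPowerSeries.coeff (R := K) (Finsupp.equivFunOnFinite.symm fun j => (e j : ℕ)) F •
        ∏ j, x j ^ ((e j : ℕ)))

/-- The data of an `n`-space algebroid curve with `r` branches: for each branch a
vector of power series (the parameterization), all with zero constant coefficient,
such that the kernels of the associated substitution maps (the primes `P i`)
are pairwise distinct. -/
structure CurveData (K : Type*) [Field K] (r n : ℕ) where
  x : Fin n → Fin r → PowerSeries K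
  const_coeff_zero : ∀ j i, PowerSeries.constantCoeff (R := K) (x j i) = 0
  primes_distinct : ∀ i i' : Fin r, i ≠ i' →
    {F : MvPowerSeries (Fin n) K | psiFun (fun j => x j i) F = 0} ≠
      {F : MvPowerSeries (Fin n) K | psiFun (fun j => x j i') F = 0}

variable {K : Type*} [Field K] {r n : ℕ}

/-- The substitution homomorphism `ψ` with values in the total quotient ring
`⊕ K((t_i))`. -/
def CurveData.psi (D : CurveData K r n) (F : MvPowerSeries (Fin n) K) :
    Fin r → LaurentSeries K :=
  fun i => (psiFun (fun j => D.x j i) F : LaurentSeries K)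

/-- The local ring `O` of the curve, viewed inside `⊕ K((t_i))`. -/
def CurveData.O (D : CurveData K r n) : Set (Fin r → LaurentSeries K) :=
  Set.range D.psi

open Classical in
/-- The order valuation on Laurent series, with `v(0) = ∞`. -/
def lOrd {K : Type*} [Field K] (f : LaurentSeries K) : WithTop ℤ :=
  if f = 0 then ⊤ else (f.order : WithTop ℤ)

/-- The value vector `v(h) = (v_1(h_1), …, v_r(h_r))`. -/
def vv {K : Type*} [Field K] {r : ℕ} (h : Fin r → LaurentSeries K) : Fin r → WithTop ℤ :=
  fun i => lOrd (h i)

/-- The semiring of values `Γ = v(O)`. -/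
def CurveData.Gamma (D : CurveData K r n) : Set (Fin r → WithTop ℤ) := vv '' D.O

/-- The maximal ideal `M` of `O` (elements of `O` all of whose components have
positive order). -/
def CurveData.Mset (D : CurveData K r n) : Set (Fin r → LaurentSeries K) :=
  {g | g ∈ D.O ∧ ∀ i, 0 < lOrd (g i)}

/-- `I` is a fractional ideal of `O`: a finitely generated `O`-submodule of
`⊕ K((t_i))` containing an element all of whose components are nonzero. -/
def CurveData.IsFracIdeal (D : CurveData K r n) (I : Set (Fin r → LaurentSeries K)) : Prop :=
  (∃ B : Finset (Fin r → LaurentSeries K),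
    I = {f | ∃ a : (Fin r → LaurentSeries K) → (Fin r → LaurentSeries K),
      (∀ b ∈ B, a b ∈ D.O) ∧ f = ∑ b ∈ B, a b * b}) ∧
  ∃ h ∈ I, ∀ i, h i ≠ 0

/-- A `G`-product `G^α = ∏_{g ∈ G} g^{α_g}`. -/
def Gprod {K : Type*} [Field K] {r : ℕ} (G : Finset (Fin r → LaurentSeries K))
    (α : (Fin r → LaurentSeries K) → ℕ) : Fin r → LaurentSeries K :=
  ∏ g ∈ G, g ^ α g

/-- `f'` is a `k`-reduction of `f` modulo `(H, G)`. -/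
def IsKRed {K : Type*} [Field K] {r : ℕ} (G H : Finset (Fin r → LaurentSeries K)) (k : Fin r)
    (f f' : Fin r → LaurentSeries K) : Prop :=
  lOrd (f k) ≠ ⊤ ∧
  ∃ (c : K) (α : (Fin r → LaurentSeries K) → ℕ) (h : Fin r → LaurentSeries K),
    h ∈ H ∧ f' = f - c • (Gprod G α * h) ∧
    (∀ i, lOrd (f i) ≤ lOrd (f' i)) ∧ lOrd (f k) < lOrd (f' k)

/-- `f'` is a reduction of `f` modulo `(H, G)`. -/
def IsRed {K : Type*} [Field K] {r : ℕ} (G H : Finset (Fin r → LaurentSeries K))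
    (f f' : Fin r → LaurentSeries K) : Prop :=
  ∃ k, IsKRed G H k f f'

/-- `(H, G)` is a Standard Basis for the fractional ideal `I`. -/
def IsSB {K : Type*} [Field K] {r n : ℕ} (D : CurveData K r n)
    (G H : Finset (Fin r → LaurentSeries K)) (I : Set (Fin r → LaurentSeries K)) : Prop :=
  ↑G ⊆ D.Mset \ {0} ∧ ↑H ⊆ I \ {0} ∧
  ∀ f ∈ I, f ≠ 0 → ∃ f', IsRed G H f f'

/-- `G` is a Standard Basis for the local ring `O`. -/
def IsSBO {K : Type*} [Field K] {r n : ℕ} (D : CurveData K r n)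
    (G : Finset (Fin r → LaurentSeries K)) : Prop :=
  IsSB D G {1} D.O

/-- `f` is an `S_k`-process of the pair `(h₁, h₂)` of `H` over `G`. -/
def IsSProc {K : Type*} [Field K] {r : ℕ} (G H : Finset (Fin r → LaurentSeries K)) (k : Fin r)
    (c₁ c₂ : K) (α₁ α₂ : (Fin r → LaurentSeries K) → ℕ)
    (h₁ h₂ f : Fin r → LaurentSeries K) : Prop :=
  h₁ ∈ H ∧ h₂ ∈ H ∧ f = c₁ • (Gprod G α₁ * h₁) + c₂ • (Gprod G α₂ * h₂) ∧
  min (lOrd ((Gprod G α₁ * h₁) k)) (lOrd ((Gprod G α₂ * h₂) k)) < lOrd (f k)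


/-!
Fix a coordinate `i` with `v_i(f)` finite and keep reducing `f` modulo `(H, G)`. A reduction
subtracts a term `o h` with `o = c G^α ∈ O`, whose value is at least that of the element being
reduced. If ever `v_i(o h) = v_i(f)`, then `γ = v(o) ∈ Γ` and `h` satisfy `v(f) ≤ γ + v(h)` with
equality at `i`. Otherwise the `i`-th value never changes, so the reductions go on forever and
some coordinate `j` is raised infinitely often, its values tending to `∞`. As `I` is closed in the
`t`-adic topology, an element of `I` close enough to this sequence vanishes at `j` while keeping
value at least `v(f)` and `i`-th value `v_i(f)`, and induction on the support concludes.
Closedness is a Mittag-Leffler argument: modulo the elements `∑ ψ(φ_b) b` with `ord φ_b ≥ k`,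
`I` is finite-dimensional, so the spans of the tails of a sequence stabilise.
-/

/-- Not found by instance search for `LaurentSeries`: there the `Algebra` structure acts through
`algebraMap`, which is not definitionally the coefficientwise action. -/
instance HahnSeries.isScalarTower_self {Γ R : Type*} [AddCommMonoid Γ] [PartialOrder Γ]
    [IsOrderedCancelAddMonoid Γ] [Semiring R] :
    IsScalarTower R (HahnSeries Γ R) (HahnSeries Γ R) :=
  ⟨fun c x y => by simp only [smul_eq_mul, ← HahnSeries.C_mul_eq_smul, mul_assoc]⟩

def HahnSeries.orderTopAtLeast {Γ : Type*} (R : Type*) [LinearOrder Γ] [Semiring R]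
    (t : WithTop Γ) : Submodule R (HahnSeries Γ R) where
  carrier := {x | t ≤ x.orderTop}
  add_mem' ha hb := min_orderTop_le_orderTop_add.trans' (le_min ha hb)
  zero_mem' := by simp
  smul_mem' c x hx := hx.trans (not_lt.1 (orderTop_smul_not_lt c x))

namespace MvPowerSeries

variable {R σ : Type*} [CommRing R]

variable (R σ) in
def orderAtLeast (k : ℕ) : Submodule R (MvPowerSeries σ R) where
  carrier := {F | (k : ℕ∞) ≤ F.order}
  add_mem' ha hb := show _ ≤ _ from (le_min ha hb).trans min_order_le_add
  zero_mem' := by simp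
  smul_mem' _ _ hF := hF.trans le_order_smul

theorem exists_sum_range_sub_mem_orderAtLeast {k : ℕ} (φ : ℕ → MvPowerSeries σ R)
    (hφ : ∀ l, φ l ∈ orderAtLeast R σ (k + l)) :
    ∃ Φ, ∀ L, ∑ l ∈ Finset.range L, φ l - Φ ∈ orderAtLeast R σ (k + L) := by
  -- only the terms with `l ≤ degree d` contribute to the coefficient at `d`
  let Φ : MvPowerSeries σ R := fun d => ∑ l ∈ Finset.range (d.degree + 1), coeff d (φ l)
  refine ⟨Φ, fun L => le_order fun d hd => ?_⟩
  have hvan : ∀ l, d.degree < k + l → coeff d (φ l) = 0 := fun l hl =>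
    coeff_of_lt_order (lt_of_lt_of_le (by exact_mod_cast hl) (hφ l))
  have hd' : d.degree < k + L := by exact_mod_cast hd
  have hM₁ := Finset.range_subset_range.2 (le_max_left L (d.degree + 1))
  have hM₂ := Finset.range_subset_range.2 (le_max_right L (d.degree + 1))
  rw [map_sub, map_sum, sub_eq_zero]
  change _ = ∑ l ∈ Finset.range (d.degree + 1), coeff d (φ l)
  rw [Finset.sum_subset hM₁ fun l _ hl => hvan l (by simp at hl; omega),
    Finset.sum_subset hM₂ fun l _ hl => hvan l (by simp at hl; omega)]

end MvPowerSeries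

theorem PowerSeries.coeff_prod_pow_eq_zero {R σ : Type*} [CommRing R] [Fintype σ]
    {x : σ → PowerSeries R} (hx : ∀ j, constantCoeff (x j) = 0) {d : σ → ℕ} {m : ℕ} {j : σ}
    (hm : m < d j) : coeff m (∏ j, x j ^ d j) = 0 := by
  have hdvd : X ^ d j ∣ ∏ j, x j ^ d j :=
    (pow_dvd_pow_of_dvd (X_dvd_iff.2 (hx j)) _).trans
      (Finset.dvd_prod_of_mem _ (Finset.mem_univ j))
  exact X_pow_dvd_iff.1 hdvd m hm

theorem PowerSeries.le_orderTop_coe {R : Type*} [Semiring R] {p : PowerSeries R} {k : ℕ}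
    (hp : (k : ℕ∞) ≤ p.order) : ((k : ℤ) : WithTop ℤ) ≤ (p : LaurentSeries R).orderTop := by
  refine HahnSeries.le_orderTop_iff_forall.2 fun j hj => ?_
  rw [coeff_coe]
  split_ifs with hneg
  · rfl
  · refine coeff_of_lt_order _ (lt_of_lt_of_le ?_ hp)
    have : j < k := by exact_mod_cast hj
    exact_mod_cast (show j.natAbs < k by omega)

theorem psiFun_eq_subst {R : Type*} [CommRing R] {x : Fin n → PowerSeries R}
    (hx : ∀ j, constantCoeff (x j) = 0) (F : MvPowerSeries (Fin n) R) :
    psiFun x F = MvPowerSeries.subst x F := by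
  ext m
  let box : (Fin n → Fin (m + 1)) → Fin n →₀ ℕ :=
    fun e => Finsupp.equivFunOnFinite.symm fun j => (e j : ℕ)
  have hbox : Function.Injective box := fun e e' h => funext fun j =>
    Fin.ext (by simpa [box] using DFunLike.congr_fun h j)
  have hsupp : Function.support (fun d : Fin n →₀ ℕ => MvPowerSeries.coeff d F •
      coeff m (d.prod fun j k => x j ^ k)) ⊆ Finset.univ.image box := by
    intro d hd
    by_contra hmem
    obtain ⟨j, hj⟩ : ∃ j, m < d j := by
      by_contra! hle
      exact hmem (Finset.mem_image.2 ⟨fun j => ⟨d j, by have := hle j; omega⟩, Finset.mem_univ _,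
        Finsupp.ext fun j => by simp [box]⟩)
    apply hd
    dsimp only
    rw [Finsupp.prod_fintype _ _ (fun _ => pow_zero _), coeff_prod_pow_eq_zero hx hj, smul_zero]
  rw [psiFun, coeff_mk, map_sum]
  -- `coeff m` is `MvPowerSeries.coeff (single () m)` only up to unfolding
  erw [MvPowerSeries.coeff_subst (MvPowerSeries.hasSubst_of_constantCoeff_zero hx),
    finsum_eq_sum_of_support_subset _ hsupp]
  rw [Finset.sum_image fun e _ e' _ h => hbox h]
  refine Finset.sum_congr rfl fun e _ => ?_
  rw [Finsupp.prod_fintype _ _ (fun _ => pow_zero _), map_smul]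
  rfl

theorem Submodule.exists_le_sup_of_antitone {R V : Type*} [Field R] [AddCommGroup V]
    [Module R V] {F P : Submodule R V} [FiniteDimensional R P] {X : ℕ → Submodule R V}
    (hX : Antitone X) (hXP : ∀ N, X N ≤ F ⊔ P) : ∃ N₀, ∀ N, X N₀ ≤ X N ⊔ F := by
  -- in `V ⧸ F` the images of the `X N` are finite-dimensional, and one of least dimension is least
  let Y : ℕ → Submodule R (V ⧸ F) := fun N => (X N).map F.mkQ
  have hYP : ∀ N, Y N ≤ P.map F.mkQ := fun N => by
    simpa [Y, Submodule.map_sup] using Submodule.map_mono (f := F.mkQ) (hXP N)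
  have : ∀ N, FiniteDimensional R (Y N) := fun N => Submodule.finiteDimensional_of_le (hYP N)
  let N₀ := Function.argmin fun N => Module.finrank R (Y N)
  refine ⟨N₀, fun N => ?_⟩
  have hY : Y N₀ = Y (max N₀ N) :=
    (Submodule.eq_of_le_of_finrank_le (Submodule.map_mono (hX (le_max_left N₀ N)))
      (Function.argmin_le (fun N => Module.finrank R (Y N)) (max N₀ N))).symm
  rw [sup_comm, ← Submodule.comap_map_mkQ, ← Submodule.map_le_iff_le_comap]
  exact hY.le.trans (Submodule.map_mono (hX (le_max_right N₀ N)))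

theorem exists_seq_of_forall_exists {α : Type*} {P : ℕ → α → Prop} {Q : ℕ → α → α → Prop}
    {a : α} (ha : P 0 a) (h : ∀ l x, P l x → ∃ y, P (l + 1) y ∧ Q l x y) :
    ∃ z : ℕ → α, z 0 = a ∧ ∀ l, P l (z l) ∧ Q l (z l) (z (l + 1)) := by
  choose! next hnextP hnextQ using h
  let z : ℕ → α := fun l => Nat.rec a (fun l x => next l x) l
  have hz : ∀ l, P l (z l) := fun l => Nat.rec ha (fun l hl => hnextP l _ hl) l
  exact ⟨z, rfl, fun l => ⟨hz l, hnextQ l _ (hz l)⟩⟩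

theorem WithTop.add_one_le_of_lt {a b : WithTop ℤ} (ha : a ≠ ⊤) (h : a < b) : a + 1 ≤ b := by
  lift a to ℤ using ha
  induction b with
  | top => exact le_top
  | coe b => exact_mod_cast (WithTop.coe_lt_coe.1 h : a < b)

theorem WithTop.exists_int_gt {ι : Type*} [Finite ι] (u : ι → WithTop ℤ) :
    ∃ t : ℤ, ∀ j, u j ≠ ⊤ → u j < t := by
  obtain ⟨M, hM⟩ := (Set.finite_range fun j => (u j).untopD 0).bddAbove
  refine ⟨M + 1, fun j hj => ?_⟩
  lift u j to ℤ using hj with a ha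
  have : a ≤ M := by simpa [← ha] using hM (Set.mem_range_self j)
  exact_mod_cast (show a < M + 1 by omega)

theorem exists_unbounded_apply_of_monotone {ι : Type*} [Finite ι] {u : ℕ → ι → WithTop ℤ}
    (hu : Monotone u) (hstep : ∀ m, ∃ k, u m k ≠ ⊤ ∧ u m k < u (m + 1) k) :
    ∃ k, u 0 k ≠ ⊤ ∧ ∀ N : ℕ, ∃ m, ((N : ℤ) : WithTop ℤ) ≤ u m k := by
  choose κ hκtop hκlt using hstep
  obtain ⟨k, hk⟩ := Finite.exists_infinite_fiber κ
  have hk' : (κ ⁻¹' {k}).Infinite := Set.infinite_coe_iff.1 hk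
  have hgrowth : ∀ c : ℕ, ∃ m, u 0 k + c ≤ u m k := by
    intro c
    induction c with
    | zero => exact ⟨0, by simp⟩
    | succ c ih =>
      obtain ⟨m, hm⟩ := ih
      obtain ⟨m', hm'k : κ m' = k, hmm'⟩ := hk'.exists_gt m
      refine ⟨m' + 1, ?_⟩
      calc u 0 k + ↑(c + 1) = u 0 k + c + 1 := by push_cast; rw [add_assoc]
        _ ≤ u m' k + 1 := add_le_add_left (hm.trans (hu hmm'.le k)) 1
        _ ≤ u (m' + 1) k := WithTop.add_one_le_of_lt (hm'k ▸ hκtop m') (hm'k ▸ hκlt m')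
  obtain ⟨m₁, hm₁⟩ := hk'.nonempty
  have htop : u 0 k ≠ ⊤ := ne_top_of_le_ne_top (hm₁ ▸ hκtop m₁) (hu (Nat.zero_le m₁) k)
  refine ⟨k, htop, fun N => ?_⟩
  lift u 0 k to ℤ using htop with a ha
  obtain ⟨m, hm⟩ := hgrowth (N - a).toNat
  refine ⟨m, le_trans ?_ hm⟩
  exact_mod_cast (show (N : ℤ) ≤ a + (N - a).toNat by omega)

theorem lOrd_eq_orderTop (f : LaurentSeries K) : lOrd f = f.orderTop := by
  unfold lOrd
  split_ifs with h
  · simp [h]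
  · exact HahnSeries.order_eq_orderTop_of_ne_zero h

theorem vv_apply (h : Fin r → LaurentSeries K) (i : Fin r) : vv h i = (h i).orderTop :=
  lOrd_eq_orderTop (h i)

theorem vv_mul (a b : Fin r → LaurentSeries K) : vv (a * b) = vv a + vv b := by
  funext i
  simp only [vv_apply, Pi.mul_apply, Pi.add_apply, HahnSeries.orderTop_mul]

def tailSpan (s : ℕ → Fin r → LaurentSeries K) (J : Set (Fin r)) (N : ℕ) :
    Submodule K (Fin r → LaurentSeries K) :=
  Submodule.span K (s '' {m | ∀ j ∈ J, ((N : ℤ) : WithTop ℤ) ≤ (s m j).orderTop})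

theorem tailSpan_antitone (s : ℕ → Fin r → LaurentSeries K) (J : Set (Fin r)) :
    Antitone (tailSpan s J) := fun _ _ hN =>
  Submodule.span_mono (Set.image_mono fun _ hm j hj => le_trans (by exact_mod_cast hN) (hm j hj))

theorem tailSpan_le_pi (s : ℕ → Fin r → LaurentSeries K) (J : Set (Fin r)) (N : ℕ) :
    tailSpan s J N ≤
      Submodule.pi J fun _ => HahnSeries.orderTopAtLeast K ((N : ℤ) : WithTop ℤ) :=
  Submodule.span_le.2 (by rintro _ ⟨m, hm, rfl⟩; exact hm)

theorem tailSpan_le {s : ℕ → Fin r → LaurentSeries K} {I : Submodule K (Fin r → LaurentSeries K)}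
    (hs : ∀ m, s m ∈ I) (J : Set (Fin r)) (N : ℕ) : tailSpan s J N ≤ I :=
  Submodule.span_le.2 (by rintro _ ⟨m, -, rfl⟩; exact hs m)

namespace CurveData

variable (D : CurveData K r n)

theorem hasSubst (i : Fin r) : MvPowerSeries.HasSubst fun j => D.x j i :=
  MvPowerSeries.hasSubst_of_constantCoeff_zero fun j => D.const_coeff_zero j i

def psiHom : MvPowerSeries (Fin n) K →+* (Fin r → LaurentSeries K) :=
  RingHom.pi fun i => (HahnSeries.ofPowerSeries ℤ K).comp
    (MvPowerSeries.substAlgHom (R := K) (D.hasSubst i)).toRingHom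

theorem psi_apply (F : MvPowerSeries (Fin n) K) (i : Fin r) :
    D.psi F i = MvPowerSeries.subst (fun j => D.x j i) F :=
  congrArg _ (psiFun_eq_subst (fun j => D.const_coeff_zero j i) F)

theorem psiHom_apply (F : MvPowerSeries (Fin n) K) : D.psiHom F = D.psi F := by
  funext i
  rw [psi_apply]
  exact congrArg (HahnSeries.ofPowerSeries ℤ K) (MvPowerSeries.substAlgHom_apply (D.hasSubst i) F)

theorem psi_smul (c : K) (F : MvPowerSeries (Fin n) K) : D.psi (c • F) = c • D.psi F := by
  funext i
  rw [Pi.smul_apply, psi_apply, psi_apply, MvPowerSeries.subst_smul (D.hasSubst i),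
    PowerSeries.coe_smul]

theorem range_psiHom : (D.psiHom.range : Set (Fin r → LaurentSeries K)) = D.O := by
  ext
  simp [CurveData.O, psiHom_apply]

theorem le_orderTop_psi {F : MvPowerSeries (Fin n) K} {k : ℕ} (hF : (k : ℕ∞) ≤ F.order)
    (i : Fin r) : ((k : ℤ) : WithTop ℤ) ≤ (D.psi F i).orderTop := by
  rw [D.psi_apply]
  refine PowerSeries.le_orderTop_coe ?_
  have hx : 1 ≤ ⨅ j, MvPowerSeries.order (D.x j i) := le_iInf fun j =>
    MvPowerSeries.one_le_order_iff_constCoeff_eq_zero.2 (D.const_coeff_zero j i)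
  rw [PowerSeries.order_eq_order]
  exact hF.trans ((le_mul_of_one_le_left zero_le hx).trans
    (MvPowerSeries.le_order_subst (D.hasSubst i) F))

theorem smul_mem_O (c : K) {a : Fin r → LaurentSeries K} (ha : a ∈ D.O) : c • a ∈ D.O := by
  obtain ⟨F, rfl⟩ := ha
  exact ⟨c • F, D.psi_smul c F⟩

theorem Gprod_mem_O {G : Finset (Fin r → LaurentSeries K)} (hG : ↑G ⊆ D.O)
    (α : (Fin r → LaurentSeries K) → ℕ) : Gprod G α ∈ D.O := by
  have hG' : ∀ g ∈ G, g ∈ D.psiHom.range := fun g hg => by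
    rw [← SetLike.mem_coe, range_psiHom]
    exact hG hg
  rw [← range_psiHom]
  exact Subring.prod_mem _ fun g hg => pow_mem (hG' g hg) _

variable (B : Finset (Fin r → LaurentSeries K))

def combination :
    ((Fin r → LaurentSeries K) → MvPowerSeries (Fin n) K) →ₗ[K] (Fin r → LaurentSeries K) where
  toFun φ := ∑ b ∈ B, D.psi (φ b) * b
  map_add' φ φ' := by
    simp only [Pi.add_apply, ← psiHom_apply, map_add, add_mul, Finset.sum_add_distrib]
  map_smul' c φ := by
    simp only [Pi.smul_apply, psi_smul, smul_mul_assoc, Finset.smul_sum, RingHom.id_apply]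

theorem combination_apply (φ : (Fin r → LaurentSeries K) → MvPowerSeries (Fin n) K) :
    D.combination B φ = ∑ b ∈ B, D.psi (φ b) * b := rfl

def fracIdeal : Submodule K (Fin r → LaurentSeries K) := LinearMap.range (D.combination B)

theorem coe_fracIdeal : (D.fracIdeal B : Set (Fin r → LaurentSeries K)) =
    {f | ∃ a : (Fin r → LaurentSeries K) → (Fin r → LaurentSeries K),
      (∀ b ∈ B, a b ∈ D.O) ∧ f = ∑ b ∈ B, a b * b} := by
  ext f
  constructor
  · rintro ⟨φ, rfl⟩
    exact ⟨fun b => D.psi (φ b), fun b _ => ⟨φ b, rfl⟩, rfl⟩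
  · classical
    rintro ⟨a, ha, rfl⟩
    choose F hF using ha
    refine ⟨fun b => if hb : b ∈ B then F b hb else 0, Finset.sum_congr rfl fun b hb => ?_⟩
    simp only [dif_pos hb, hF]

theorem mul_mem_fracIdeal {o y : Fin r → LaurentSeries K} (ho : o ∈ D.O)
    (hy : y ∈ D.fracIdeal B) : o * y ∈ D.fracIdeal B := by
  obtain ⟨F, rfl⟩ := ho
  obtain ⟨φ, rfl⟩ := hy
  refine ⟨fun b => F * φ b, ?_⟩
  simp only [combination_apply, Finset.mul_sum, ← psiHom_apply, map_mul, mul_assoc]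

def filtration (k : ℕ) : Submodule K (Fin r → LaurentSeries K) :=
  (Submodule.pi Set.univ fun _ => MvPowerSeries.orderAtLeast K (Fin n) k).map (D.combination B)

theorem filtration_le_fracIdeal (k : ℕ) : D.filtration B k ≤ D.fracIdeal B :=
  LinearMap.map_le_range

theorem filtration_antitone : Antitone (D.filtration B) := fun _ _ hk =>
  Submodule.map_mono fun _ hφ b hb =>
    show (_ : ℕ∞) ≤ _ from le_trans (by exact_mod_cast hk) (hφ b hb)

theorem exists_filtration_le (t : ℤ) : ∃ k, D.filtration B k ≤
    Submodule.pi Set.univ fun _ => HahnSeries.orderTopAtLeast K (t : WithTop ℤ) := by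
  obtain ⟨c, hc⟩ : ∃ c : ℤ, ∀ b ∈ B, ∀ j, (c : WithTop ℤ) ≤ (b j).orderTop := by
    obtain ⟨lb, hlb⟩ := (B.finite_toSet.image2 (fun b j => (b j).orderTop)
      (Set.finite_univ (α := Fin r))).bddBelow
    refine ⟨lb.untopD 0, fun b hb j =>
      le_trans ?_ (hlb (Set.mem_image2_of_mem hb (Set.mem_univ j)))⟩
    cases lb <;> simp
  refine ⟨(t - c).toNat, ?_⟩
  rintro _ ⟨φ, hφ, rfl⟩ j -
  rw [combination_apply, Finset.sum_apply]
  refine Submodule.sum_mem (HahnSeries.orderTopAtLeast K (t : WithTop ℤ)) fun b hb => ?_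
  show _ ≤ (D.psi (φ b) j * b j).orderTop
  rw [HahnSeries.orderTop_mul]
  calc ((t : ℤ) : WithTop ℤ) ≤ (((t - c).toNat : ℤ) : WithTop ℤ) + (c : WithTop ℤ) := by
        exact_mod_cast (show t ≤ (t - c).toNat + c by omega)
    _ ≤ _ := add_le_add (D.le_orderTop_psi (hφ b (Set.mem_univ b)) j) (hc b hb j)

def monomialSpan (k : ℕ) : Submodule K (Fin r → LaurentSeries K) :=
  Submodule.span K (Set.image2 (fun e b => D.psi (MvPowerSeries.monomial e 1) * b)
    {e : Fin n →₀ ℕ | e.degree < k} B)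

instance (k : ℕ) : FiniteDimensional K (D.monomialSpan B k) :=
  FiniteDimensional.span_of_finite K ((Finsupp.finite_of_degree_lt k).image2 _ B.finite_toSet)

theorem psi_truncTotal_mul_mem_monomialSpan (k : ℕ) (F : MvPowerSeries (Fin n) K)
    {b : Fin r → LaurentSeries K} (hb : b ∈ B) :
    D.psi (MvPowerSeries.truncTotal k F) * b ∈ D.monomialSpan B k := by
  have hF : (MvPowerSeries.truncTotal k F : MvPowerSeries (Fin n) K) =
      ∑ e ∈ (Finsupp.finite_of_degree_lt k).toFinset,
        MvPowerSeries.coeff e F • MvPowerSeries.monomial e 1 := by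
    rw [MvPowerSeries.truncTotal, MvPowerSeries.truncFinset_apply,
      ← MvPolynomial.coeToMvPowerSeries.ringHom_apply, map_sum]
    refine Finset.sum_congr rfl fun e _ => ?_
    rw [MvPolynomial.coeToMvPowerSeries.ringHom_apply, MvPolynomial.coe_monomial, ← map_smul,
      smul_eq_mul, mul_one]
  rw [hF, ← psiHom_apply, map_sum, Finset.sum_mul]
  refine Submodule.sum_mem _ fun e he => ?_
  rw [psiHom_apply, psi_smul, smul_mul_assoc]
  exact Submodule.smul_mem _ _
    (Submodule.subset_span (Set.mem_image2_of_mem (by simpa using he) hb))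

theorem fracIdeal_le_filtration_sup_monomialSpan (k : ℕ) :
    D.fracIdeal B ≤ D.filtration B k ⊔ D.monomialSpan B k := by
  rintro _ ⟨φ, rfl⟩
  let T : (Fin r → LaurentSeries K) → MvPowerSeries (Fin n) K :=
    fun b => MvPowerSeries.truncTotal k (φ b)
  rw [show φ = (φ - T) + T by abel, map_add]
  refine Submodule.add_mem_sup ⟨φ - T, fun b _ => MvPowerSeries.le_order fun d hd => ?_, rfl⟩
    (Submodule.sum_mem _ fun b hb => D.psi_truncTotal_mul_mem_monomialSpan B k (φ b) hb)
  simp [T, MvPowerSeries.coeff_truncTotal _ (by exact_mod_cast hd)]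

theorem exists_forall_sub_mem_filtration {k : ℕ} {z : ℕ → Fin r → LaurentSeries K}
    (hz : ∀ l, z l - z (l + 1) ∈ D.filtration B (k + l)) :
    ∃ x, ∀ L, x - z L ∈ D.filtration B (k + L) := by
  choose φ hφ hφz using hz
  choose Φ hΦ using fun b => MvPowerSeries.exists_sum_range_sub_mem_orderAtLeast
    (fun l => φ l b) fun l => hφ l b (Set.mem_univ b)
  refine ⟨z 0 - D.combination B Φ, fun L => ⟨∑ l ∈ Finset.range L, φ l - Φ, fun b _ => ?_, ?_⟩⟩
  · simpa using hΦ b L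
  · rw [map_sub, map_sum, Finset.sum_congr rfl fun l _ => hφz l, Finset.sum_range_sub']
    abel

theorem exists_near_mem_fracIdeal_eq_zero {s : ℕ → Fin r → LaurentSeries K}
    (hs : ∀ m, s m ∈ D.fracIdeal B) {J : Set (Fin r)}
    (hJ : ∀ N : ℕ, ∃ m, ∀ j ∈ J, ((N : ℤ) : WithTop ℤ) ≤ (s m j).orderTop) (t : ℤ) :
    ∃ z ∈ D.fracIdeal B, (∀ j ∈ J, z j = 0) ∧
      ∃ m, ∀ j, (t : WithTop ℤ) ≤ ((z - s m) j).orderTop := by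
  -- Modulo `filtration k` the tail spans stabilise, so an element of one tail span differs from
  -- an element of any later one by an element of `filtration k`: this gives a Cauchy sequence.
  choose N₀ hN₀ using fun k => Submodule.exists_le_sup_of_antitone (tailSpan_antitone s J)
    fun N => (tailSpan_le hs J N).trans (D.fracIdeal_le_filtration_sup_monomialSpan B k)
  obtain ⟨k, hk⟩ := D.exists_filtration_le B t
  let N : ℕ → ℕ := fun l => max (N₀ (k + l)) l
  obtain ⟨m₀, hm₀⟩ := hJ (N 0)
  obtain ⟨z, hz0, hz⟩ := exists_seq_of_forall_exists (P := fun l y => y ∈ tailSpan s J (N l))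
    (Q := fun l y y' => y - y' ∈ D.filtration B (k + l)) (Submodule.subset_span ⟨m₀, hm₀, rfl⟩)
    fun l y hy => by
      obtain ⟨y', hy', w, hw, rfl⟩ := Submodule.mem_sup.1
        (hN₀ (k + l) (N (l + 1)) (tailSpan_antitone s J (le_max_left _ _) hy))
      exact ⟨y', hy', by simpa using hw⟩
  obtain ⟨x, hx⟩ := D.exists_forall_sub_mem_filtration B fun l => (hz l).2
  refine ⟨x, ?_, fun j hj => ?_, m₀, fun j => ?_⟩
  · rw [← sub_add_cancel x (z 0)]
    exact add_mem (D.filtration_le_fracIdeal B _ (hx 0)) (tailSpan_le hs J _ (hz 0).1)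
  · refine HahnSeries.orderTop_eq_top.1 (WithTop.eq_top_iff_forall_ge.2 fun t' => ?_)
    obtain ⟨k', hk'⟩ := D.exists_filtration_le B t'
    let L := max k' t'.toNat
    have h₁ : (t' : WithTop ℤ) ≤ (z L j).orderTop := by
      refine le_trans ?_ (tailSpan_le_pi s J _ (hz L).1 j hj)
      have : t'.toNat ≤ N L := (le_max_right k' t'.toNat).trans (le_max_right _ _)
      exact_mod_cast (show t' ≤ N L by omega)
    have h₂ : (t' : WithTop ℤ) ≤ ((x - z L) j).orderTop :=
      hk' (D.filtration_antitone B (by omega) (hx L)) j (Set.mem_univ j)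
    simpa using HahnSeries.min_orderTop_le_orderTop_add.trans' (le_min h₁ h₂)
  · rw [← hz0]
    exact hk (hx 0) j (Set.mem_univ j)

def AttainedAt (H : Finset (Fin r → LaurentSeries K)) (δ : Fin r → WithTop ℤ) (i : Fin r) :
    Prop :=
  ∃ γ ∈ D.Gamma, ∃ h ∈ H, δ ≤ γ + vv h ∧ γ i + vv h i = δ i

variable {B} {G H : Finset (Fin r → LaurentSeries K)}

theorem attainedAt_of_mul {δ : Fin r → WithTop ℤ} {i : Fin r} {o h : Fin r → LaurentSeries K}
    (ho : o ∈ D.O) (hh : h ∈ H) (hδ : δ ≤ vv (o * h)) (hi : vv (o * h) i = δ i) :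
    D.AttainedAt H δ i :=
  ⟨vv o, ⟨o, ho, rfl⟩, h, hh, vv_mul o h ▸ hδ, by rwa [vv_mul] at hi⟩

variable (hG : ↑G ⊆ D.O) (hH : ↑H ⊆ (D.fracIdeal B : Set (Fin r → LaurentSeries K)))
  (hred : ∀ f ∈ D.fracIdeal B, f ≠ 0 → ∃ f', IsRed G H f f')
include hG hH hred

theorem exists_reduction_of_not_attainedAt {δ : Fin r → WithTop ℤ} {i : Fin r}
    (hδi : δ i ≠ ⊤) (hno : ¬ D.AttainedAt H δ i) {y : Fin r → LaurentSeries K}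
    (hy : y ∈ D.fracIdeal B) (hδy : δ ≤ vv y) (hyi : vv y i = δ i) :
    ∃ y' ∈ D.fracIdeal B, vv y ≤ vv y' ∧ vv y' i = δ i ∧
      ∃ k, vv y k ≠ ⊤ ∧ vv y k < vv y' k := by
  have hy0 : y ≠ 0 := by
    rintro rfl
    exact hδi (by simpa [vv_apply] using hyi.symm)
  obtain ⟨f', k, hktop, c, α, h, hh, rfl, hmono, hlt⟩ := hred y hy hy0
  rw [← smul_mul_assoc] at hmono hlt
  have ho := D.smul_mem_O c (D.Gprod_mem_O hG α)
  set o := c • Gprod G α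
  have hterm : vv y ≤ vv (o * h) := fun j => by
    rw [show o * h = y - (y - o * h) by abel, vv_apply, vv_apply]
    exact HahnSeries.min_orderTop_le_orderTop_sub.trans'
      (le_min le_rfl (by simpa [lOrd_eq_orderTop] using hmono j))
  have hlt_i : (y i).orderTop < ((o * h) i).orderTop := by
    rw [← vv_apply, ← vv_apply, hyi]
    exact lt_of_le_of_ne (hyi ▸ hterm i)
      fun h' => hno (D.attainedAt_of_mul ho hh (hδy.trans hterm) h'.symm)
  refine ⟨y - o * h, sub_mem hy (D.mul_mem_fracIdeal B ho (hH hh)), hmono, ?_, k, hktop, hlt⟩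
  rw [vv_apply, Pi.sub_apply, HahnSeries.orderTop_sub hlt_i, ← vv_apply, hyi]

theorem exists_seq_of_not_attainedAt {δ : Fin r → WithTop ℤ} {i : Fin r} (hδi : δ i ≠ ⊤)
    (hno : ¬ D.AttainedAt H δ i) {y : Fin r → LaurentSeries K} (hy : y ∈ D.fracIdeal B)
    (hδy : δ ≤ vv y) (hyi : vv y i = δ i) :
    ∃ s : ℕ → Fin r → LaurentSeries K, s 0 = y ∧ (∀ m, s m ∈ D.fracIdeal B ∧ vv (s m) i = δ i) ∧
      Monotone (fun m => vv (s m)) ∧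
      ∀ m, ∃ k, vv (s m) k ≠ ⊤ ∧ vv (s m) k < vv (s (m + 1)) k := by
  obtain ⟨s, hs0, hs⟩ := exists_seq_of_forall_exists
    (P := fun _ y' => y' ∈ D.fracIdeal B ∧ vv y ≤ vv y' ∧ vv y' i = δ i)
    (Q := fun _ y' y'' => vv y' ≤ vv y'' ∧ ∃ k, vv y' k ≠ ⊤ ∧ vv y' k < vv y'' k)
    ⟨hy, le_rfl, hyi⟩ fun _ y' ⟨hy', hyy', hy'i⟩ => by
      obtain ⟨y'', hy'', hmono, hi, hk⟩ :=
        D.exists_reduction_of_not_attainedAt hG hH hred hδi hno hy' (hδy.trans hyy') hy'i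
      exact ⟨y'', ⟨hy'', hyy'.trans hmono, hi⟩, hmono, hk⟩
  exact ⟨s, hs0, fun m => ⟨(hs m).1.1, (hs m).1.2.2⟩,
    monotone_nat_of_le_succ fun m => (hs m).2.1, fun m => (hs m).2.2⟩

theorem exists_smaller_support_of_not_attainedAt {δ : Fin r → WithTop ℤ} {i : Fin r}
    (hδi : δ i ≠ ⊤) (hno : ¬ D.AttainedAt H δ i) {y : Fin r → LaurentSeries K}
    (hy : y ∈ D.fracIdeal B) (hδy : δ ≤ vv y) (hyi : vv y i = δ i) :
    ∃ j, y j ≠ 0 ∧ ∃ z ∈ D.fracIdeal B, vv y ≤ vv z ∧ vv z i = δ i ∧ z j = 0 := by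
  obtain ⟨s, rfl, hs, hmono, hstep⟩ :=
    D.exists_seq_of_not_attainedAt hG hH hred hδi hno hy hδy hyi
  obtain ⟨j, hj, hunb⟩ := exists_unbounded_apply_of_monotone hmono hstep
  -- approximate the sequence to an order `t` beyond every finite value of `s 0`, by an element
  -- vanishing at `j` and wherever `s 0` vanishes
  obtain ⟨t, ht⟩ := WithTop.exists_int_gt (vv (s 0))
  have hJ : ∀ N : ℕ, ∃ m, ∀ j' ∈ insert j {j' | s 0 j' = 0},
      ((N : ℤ) : WithTop ℤ) ≤ (s m j').orderTop := fun N => by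
    obtain ⟨m, hm⟩ := hunb N
    refine ⟨m, fun j' hj' => ?_⟩
    rcases hj' with rfl | h0
    · rwa [← vv_apply]
    · have := hmono (Nat.zero_le m) j'
      simp_all [vv_apply]
  obtain ⟨z, hz, hzJ, m, hzm⟩ := D.exists_near_mem_fracIdeal_eq_zero B (fun m => (hs m).1) hJ t
  have hz_eq : ∀ j', z j' = s m j' + (z - s m) j' := fun j' => by simp
  refine ⟨j, by simpa [vv_apply] using hj, z, hz, fun j' => ?_, ?_, hzJ j (Set.mem_insert _ _)⟩
  · by_cases h0 : s 0 j' = 0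
    · simp [vv_apply, hzJ j' (Set.mem_insert_of_mem _ h0)]
    · rw [vv_apply z j', hz_eq j']
      refine HahnSeries.min_orderTop_le_orderTop_add.trans' (le_min ?_ ?_)
      · simpa [vv_apply] using hmono (Nat.zero_le m) j'
      · exact (ht j' (by simpa [vv_apply] using h0)).le.trans (hzm j')
  · have hlt : (s m i).orderTop < ((z - s m) i).orderTop := by
      rw [← vv_apply, (hs m).2, ← (hs 0).2]
      exact (ht i ((hs 0).2 ▸ hδi)).trans_le (hzm i)
    rw [vv_apply, hz_eq, HahnSeries.orderTop_add_eq_left hlt, ← vv_apply, (hs m).2]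

theorem attainedAt_of_mem {δ : Fin r → WithTop ℤ} {i : Fin r} (hδi : δ i ≠ ⊤)
    {y : Fin r → LaurentSeries K} (hy : y ∈ D.fracIdeal B) (hδy : δ ≤ vv y)
    (hyi : vv y i = δ i) : D.AttainedAt H δ i := by
  by_contra hno
  obtain ⟨j, hj, z, hz, hyz, hzi, hzj⟩ :=
    D.exists_smaller_support_of_not_attainedAt hG hH hred hδi hno hy hδy hyi
  have hsupp : {j | z j ≠ 0} ⊂ {j | y j ≠ 0} := by
    refine (Set.ssubset_iff_of_subset fun j' (hzj' : z j' ≠ 0) (hyj' : y j' = 0) => hzj' ?_).2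
      ⟨j, hj, fun h => h hzj⟩
    simpa [vv_apply, hyj'] using hyz j'
  exact hno (attainedAt_of_mem hδi hz (hδy.trans hyz) hzi)
termination_by {j | y j ≠ 0}.ncard
decreasing_by exact Set.ncard_lt_ncard hsupp

end CurveData

theorem statement8_general {K : Type*} [Field K] {r n : ℕ}
    (D : CurveData K r n) (G H : Finset (Fin r → LaurentSeries K))
    (I : Set (Fin r → LaurentSeries K)) (hI : D.IsFracIdeal I)
    (hSB : IsSB D G H I)
    (f : Fin r → LaurentSeries K) (hf : f ∈ I) (hf0 : f ≠ 0) :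
    ∃ (s : ℕ) (γ : Fin (s + 1) → Fin r → WithTop ℤ)
      (h : Fin (s + 1) → Fin r → LaurentSeries K),
      (∀ j, γ j ∈ D.Gamma) ∧ (∀ j, h j ∈ H) ∧
      ∀ i, lOrd (f i) =
        Finset.univ.inf' Finset.univ_nonempty (fun j => γ j i + lOrd (h j i)) := by
  obtain ⟨⟨B, rfl⟩, -⟩ := hI
  obtain ⟨hG, hH, hred⟩ := hSB
  rw [← D.coe_fracIdeal B] at hf hH hred
  have hattained : ∀ i, vv f i ≠ ⊤ → D.AttainedAt H (vv f) i := fun i hi =>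
    D.attainedAt_of_mem (fun g hg => (hG hg).1.1) (fun h hh => (hH hh).1) hred hi hf le_rfl rfl
  obtain ⟨i₀, hi₀⟩ : ∃ i, vv f i ≠ ⊤ := by
    by_contra! h
    exact hf0 (funext fun i => by simpa [vv_apply] using h i)
  have hchoice : ∀ i, ∃ γ ∈ D.Gamma, ∃ h ∈ H, vv f ≤ γ + vv h ∧
      (vv f i ≠ ⊤ → γ i + vv h i = vv f i) := fun i => by
    by_cases hi : vv f i = ⊤
    · obtain ⟨γ, hγ, h, hh, hle, -⟩ := hattained i₀ hi₀
      exact ⟨γ, hγ, h, hh, hle, fun h' => absurd hi h'⟩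
    · obtain ⟨γ, hγ, h, hh, hle, heq⟩ := hattained i hi
      exact ⟨γ, hγ, h, hh, hle, fun _ => heq⟩
  choose γ hγ h hh hle heq using hchoice
  obtain ⟨s, rfl⟩ := Nat.exists_eq_add_one_of_ne_zero (Fin.pos i₀).ne'
  refine ⟨s, γ, h, hγ, hh, fun i => le_antisymm (Finset.le_inf' _ _ fun j _ => hle j i) ?_⟩
  by_cases hi : vv f i = ⊤
  · exact (le_top : _ ≤ ⊤).trans_eq hi.symm
  · exact (Finset.inf'_le _ (Finset.mem_univ i)).trans (heq i hi).le

/-- Corollary 3.6. If `(H, G)` is a Standard Basis for a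
fractional ideal `I` of `O`, then `v(H)` generates `v(I)` as a `Γ`-semimodule:
for every nonzero `f ∈ I` there are `s ≥ 1`, `γ_1, …, γ_s ∈ Γ` and
`h_1, …, h_s ∈ H` with `v(f) = inf_j (γ_j + v(h_j))`. In particular `v(I)` is a
finitely generated `Γ`-semimodule. -/
theorem statement8 {K : Type*} [Field K] [IsAlgClosed K] {r n : ℕ} (hr : 1 ≤ r)
    (D : CurveData K r n) (G H : Finset (Fin r → LaurentSeries K))
    (I : Set (Fin r → LaurentSeries K)) (hI : D.IsFracIdeal I)
    (hSB : IsSB D G H I)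
    (f : Fin r → LaurentSeries K) (hf : f ∈ I) (hf0 : f ≠ 0) :
    ∃ (s : ℕ) (γ : Fin (s + 1) → Fin r → WithTop ℤ)
      (h : Fin (s + 1) → Fin r → LaurentSeries K),
      (∀ j, γ j ∈ D.Gamma) ∧ (∀ j, h j ∈ H) ∧
      ∀ i, lOrd (f i) =
        Finset.univ.inf' Finset.univ_nonempty (fun j => γ j i + lOrd (h j i)) :=
  statement8_general D G H I hI hSB f hf hf0
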